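/- arXiv:math/0505076 — 10 statements merged into one kernel-verified Lean document; each statement's English description precedes it below -/
import Mathlib

section
/- If U is a ring-supporting subset of a group G, then the pair (U, U^{-1}) is both a left and a right modular pair. -/
/-- A subset `U` of a group `G` containing `1` is ring-supporting if for all
`u, v, w ∈ U` with `u*v*w ∈ U`, one has `u*v ∈ U ↔ v*w ∈ U`. -/
def RingSupporting {G : Type*} [Group G] (U : Set G) : Prop :=
  (1 : G) ∈ U ∧ ∀ u ∈ U, ∀ v ∈ U, ∀ w ∈ U, u * v * w ∈ U → (u * v ∈ U ↔ v * w ∈ U)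

/-- `(S, U)` is a right premodular pair. -/
def RightPremodular {G : Type*} [Group G] (S U : Set G) : Prop :=
  ∀ s ∈ S, ∀ u ∈ U, ∀ v ∈ U, s * u * v ∈ S → (s * u ∈ S ↔ u * v ∈ U)

/-- `(U, S)` is a left premodular pair. -/
def LeftPremodular {G : Type*} [Group G] (U S : Set G) : Prop :=
  ∀ u ∈ U, ∀ v ∈ U, ∀ s ∈ S, u * v * s ∈ S → (u * v ∈ U ↔ v * s ∈ S)

/-- `(S, U)` is a right modular pair: right premodular with `U` ring-supporting. -/
def RightModular {G : Type*} [Group G] (S U : Set G) : Prop :=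
  RightPremodular S U ∧ RingSupporting U

/-- `(U, S)` is a left modular pair: left premodular with `U` ring-supporting. -/
def LeftModular {G : Type*} [Group G] (U S : Set G) : Prop :=
  LeftPremodular U S ∧ RingSupporting U

theorem ringSupporting_left_and_right_modular {G : Type*} [Group G] (U : Set G)
    (hU : RingSupporting U) :
    LeftModular U U⁻¹ ∧ RightModular U U⁻¹ := by
  obtain ⟨h1, h⟩ := hU
  have hRS : RingSupporting U⁻¹ := by
    refine ⟨by simpa using h1, ?_⟩
    intro u hu v hv w hw huvw
    have key := h w⁻¹ (Set.mem_inv.mp hw) v⁻¹ (Set.mem_inv.mp hv) u⁻¹ (Set.mem_inv.mp hu)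
      (by simpa [mul_assoc, mul_inv_rev] using Set.mem_inv.mp huvw)
    simpa [Set.mem_inv, mul_inv_rev] using key.symm
  refine ⟨⟨?_, ⟨h1, h⟩⟩, ⟨?_, hRS⟩⟩
  · intro u hu v hv s hs huvs
    have hs' : s⁻¹ ∈ U := Set.mem_inv.mp hs
    have habc : s⁻¹ * v⁻¹ * u⁻¹ ∈ U := by
      simpa [mul_assoc, mul_inv_rev] using Set.mem_inv.mp huvs
    have key := h (s⁻¹ * v⁻¹ * u⁻¹) habc u hu v hv
      (by group; simpa using hs')
    have h2 : s⁻¹ * v⁻¹ * u⁻¹ * u = s⁻¹ * v⁻¹ := by group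
    rw [h2] at key
    simpa [Set.mem_inv, mul_inv_rev] using key.symm
  · intro s hs u hu v hv hsuv
    have key := h (s * u * v) (by simpa using hsuv) v⁻¹ (Set.mem_inv.mp hv) u⁻¹
      (Set.mem_inv.mp hu) (by group; simpa using hs)
    have h2 : s * u * v * v⁻¹ = s * u := by group
    rw [h2] at key
    simpa [Set.mem_inv, mul_inv_rev] using key
end

section
/- Let U be a subset of a group G containing 1. Then the stabilizer (U:U) = {g ∈ G : gU = U} is a subgroup of G contained in U, and if moreover U is ring-supporting, then (U:U) = U ∩ U^{-1}. -/
theorem stabilizer_subgroup_and_eq_inter_inv {G : Type*} [Group G] (U : Set G)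
    (h1 : (1 : G) ∈ U) :
    (∃ H : Subgroup G, (H : Set G) = {g : G | (g * ·) '' U = U}) ∧
    {g : G | (g * ·) '' U = U} ⊆ U ∧
    (RingSupporting U → {g : G | (g * ·) '' U = U} = U ∩ U⁻¹) := by
  have key : ∀ g : G, (g * ·) '' U = U ↔
      (∀ u ∈ U, g * u ∈ U) ∧ (∀ u ∈ U, g⁻¹ * u ∈ U) := by
    intro g
    constructor
    · intro hg
      refine ⟨fun u hu => ?_, fun u hu => ?_⟩
      · have : g * u ∈ (g * ·) '' U := ⟨u, hu, rfl⟩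
        rwa [hg] at this
      · rw [← hg] at hu
        obtain ⟨x, hx, rfl⟩ := hu
        simpa using hx
    · rintro ⟨hA, hB⟩
      apply Set.Subset.antisymm
      · rintro _ ⟨x, hx, rfl⟩; exact hA x hx
      · intro x hx
        exact ⟨g⁻¹ * x, hB x hx, by group⟩
  refine ⟨⟨⟨⟨⟨{g : G | (g * ·) '' U = U}, ?_⟩, ?_⟩, ?_⟩, rfl⟩, ?_, ?_⟩
  · rintro a b ha hb
    obtain ⟨ha1, ha2⟩ := (key a).mp ha
    obtain ⟨hb1, hb2⟩ := (key b).mp hb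
    refine (key (a * b)).mpr ⟨fun u hu => ?_, fun u hu => ?_⟩
    · have := ha1 _ (hb1 u hu); rwa [← mul_assoc] at this
    · have := hb2 _ (ha2 u hu)
      rwa [show b⁻¹ * (a⁻¹ * u) = (a * b)⁻¹ * u by group] at this
  · refine (key 1).mpr ⟨fun u hu => by simpa, fun u hu => by simpa⟩
  · intro a ha
    obtain ⟨ha1, ha2⟩ := (key a).mp ha
    exact (key a⁻¹).mpr ⟨ha2, by simpa using ha1⟩
  · intro g hg
    have := ((key g).mp hg).1 1 h1
    simpa using this
  · intro hRS
    ext g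
    constructor
    · intro hg
      obtain ⟨h1', h2'⟩ := (key g).mp hg
      refine ⟨by simpa using h1' 1 h1, ?_⟩
      rw [Set.mem_inv]
      simpa using h2' 1 h1
    · rintro ⟨hgU, hgi⟩
      rw [Set.mem_inv] at hgi
      refine (key g).mpr ⟨fun u hu => ?_, fun u hu => ?_⟩
      · have h := hRS.2 g⁻¹ hgi g hgU u hu (by simpa using hu)
        exact h.mp (by simpa using hRS.1)
      · have h := hRS.2 g hgU g⁻¹ hgi u hu (by simpa using hu)
        exact h.mp (by simpa using hRS.1)
end

section
/- Let U ⊆ ℤ be a subset containing 0 with stabilizer (U:U) = nℤ (n ≥ 1), and p : ℤ → ℤ/nℤ the canonical projection. Then U is ring-supporting if and only if p(U) is a ring-supporting subset of ℤ/nℤ with trivial stabilizer (p(U) : p(U)) = {0}; in that case U = p^{-1}(p(U)). -/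
/-- A subset `U` of an additive commutative group containing `0` is ring-supporting if
for all `u, v, w ∈ U` with `u + v + w ∈ U`, one has `u + v ∈ U ↔ v + w ∈ U`. -/
def AddRingSupporting {A : Type*} [AddCommGroup A] (U : Set A) : Prop :=
  (0 : A) ∈ U ∧ ∀ u ∈ U, ∀ v ∈ U, ∀ w ∈ U, u + v + w ∈ U → (u + v ∈ U ↔ v + w ∈ U)

/-- The stabilizer `(U : U) = {a | a + U = U}` of a subset `U` of an additive group. -/
def AddStab {A : Type*} [AddCommGroup A] (U : Set A) : Set A :=
  {a : A | (a + ·) '' U = U}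

lemma mem_addStab_iff {A : Type*} [AddCommGroup A] (U : Set A) (a : A) :
    a ∈ AddStab U ↔ ∀ x, a + x ∈ U ↔ x ∈ U := by
  constructor
  · intro h x
    have h' : (a + ·) '' U = U := h
    constructor
    · intro hx
      rw [← h'] at hx
      obtain ⟨y, hy, hxy⟩ := hx
      simp only at hxy
      have : y = x := by
        have := add_left_cancel hxy
        exact this
      rwa [← this]
    · intro hx
      rw [← h']
      exact ⟨x, hx, rfl⟩
  · intro h
    show (a + ·) '' U = U
    ext z
    constructor
    · rintro ⟨y, hy, rfl⟩
      exact (h y).mpr hy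
    · intro hz
      refine ⟨z - a, (h (z - a)).mp ?_, by simp⟩
      have : a + (z - a) = z := by abel
      rwa [this]

theorem ringSupporting_iff_mod_n (U : Set ℤ) (n : ℕ) (hn : 1 ≤ n)
    (h0 : (0 : ℤ) ∈ U)
    (hst : AddStab U = {m : ℤ | (n : ℤ) ∣ m}) :
    (AddRingSupporting U ↔
      (AddRingSupporting ((fun x : ℤ => (x : ZMod n)) '' U) ∧
        AddStab ((fun x : ℤ => (x : ZMod n)) '' U) = {0})) ∧
    (AddRingSupporting U →
      U = (fun x : ℤ => (x : ZMod n)) ⁻¹' ((fun x : ℤ => (x : ZMod n)) '' U)) := by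
  haveI : NeZero n := ⟨by omega⟩
  have hperiod : ∀ m : ℤ, (n : ℤ) ∣ m → ∀ x : ℤ, (m + x ∈ U ↔ x ∈ U) := by
    intro m hm x
    have hmem : m ∈ AddStab U := by rw [hst]; exact hm
    exact (mem_addStab_iff U m).mp hmem x
  have hkey : ∀ x : ℤ, x ∈ U ↔ (x : ZMod n) ∈ (fun x : ℤ => (x : ZMod n)) '' U := by
    intro x
    constructor
    · intro hx; exact ⟨x, hx, rfl⟩
    · rintro ⟨u, hu, huv⟩
      simp only at huv
      have hdvd : (n : ℤ) ∣ (x - u) := by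
        rw [← ZMod.intCast_zmod_eq_zero_iff_dvd]
        push_cast
        rw [sub_eq_zero, huv]
      have := (hperiod _ hdvd u).mpr hu
      simpa using this
  have hstabV : AddStab ((fun x : ℤ => (x : ZMod n)) '' U) = {0} := by
    ext a
    simp only [Set.mem_singleton_iff]
    constructor
    · intro ha
      obtain ⟨m, rfl⟩ := ZMod.intCast_surjective a
      have ha' := (mem_addStab_iff _ _).mp ha
      have hm : m ∈ AddStab U := by
        rw [mem_addStab_iff]
        intro x
        calc m + x ∈ U ↔ ((m + x : ℤ) : ZMod n) ∈ (fun x : ℤ => (x : ZMod n)) '' U :=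
              hkey _
          _ ↔ (m : ZMod n) + (x : ZMod n) ∈ (fun x : ℤ => (x : ZMod n)) '' U := by push_cast; rfl
          _ ↔ (x : ZMod n) ∈ (fun x : ℤ => (x : ZMod n)) '' U := ha' _
          _ ↔ x ∈ U := (hkey x).symm
      rw [hst] at hm
      rwa [ZMod.intCast_zmod_eq_zero_iff_dvd]
    · rintro rfl
      rw [mem_addStab_iff]
      intro x
      rw [zero_add]
  have hRS : AddRingSupporting U ↔ AddRingSupporting ((fun x : ℤ => (x : ZMod n)) '' U) := by
    constructor
    · rintro ⟨-, hU⟩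
      refine ⟨⟨0, h0, by simp⟩, ?_⟩
      rintro _ ⟨u, hu, rfl⟩ _ ⟨v, hv, rfl⟩ _ ⟨w, hw, rfl⟩ hsum
      simp only
      have hs : u + v + w ∈ U := by
        rw [hkey]
        push_cast
        exact hsum
      have h1 : ((u : ZMod n) + (v : ZMod n) = ((u + v : ℤ) : ZMod n)) := by push_cast; ring
      have h2 : ((v : ZMod n) + (w : ZMod n) = ((v + w : ℤ) : ZMod n)) := by push_cast; ring
      rw [h1, h2, ← hkey, ← hkey]
      exact hU u hu v hv w hw hs
    · rintro ⟨-, hV⟩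
      refine ⟨h0, ?_⟩
      intro u hu v hv w hw hs
      have hsum : (u : ZMod n) + (v : ZMod n) + (w : ZMod n) ∈
          (fun x : ℤ => (x : ZMod n)) '' U := by
        have := (hkey _).mp hs
        push_cast at this
        exact this
      have := hV _ ⟨u, hu, rfl⟩ _ ⟨v, hv, rfl⟩ _ ⟨w, hw, rfl⟩ hsum
      rw [hkey (u + v), hkey (v + w)]
      push_cast
      exact this
  refine ⟨⟨fun h => ⟨hRS.mp h, hstabV⟩, fun h => hRS.mpr h.1⟩, fun _ => ?_⟩
  ext x
  exact hkey x
end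

section
/- Let U be a proper ring-supporting subset of ℤ containing an infinite interval [m, +∞) for some integer m. Then m ≥ 0, the stabilizer (U:U) = 0, and U is an additive submonoid of ℕ. -/
theorem ringSupporting_with_upper_ray (U : Set ℤ) (hU : AddRingSupporting U)
    (hproper : U ≠ Set.univ) (m : ℤ) (hm : Set.Ici m ⊆ U) :
    0 ≤ m ∧ AddStab U = {0} ∧ U ⊆ Set.Ici (0 : ℤ) ∧
      ∀ u ∈ U, ∀ v ∈ U, u + v ∈ U := by
  obtain ⟨h0, hrs⟩ := hU
  have hadd : ∀ u ∈ U, ∀ v ∈ U, u + v ∈ U := by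
    intro u hu v hv
    set w := max m (max (m - v) (m - u - v)) with hw
    have hwU : w ∈ U := hm (Set.mem_Ici.mpr (le_max_left _ _))
    have hvw : v + w ∈ U := hm (Set.mem_Ici.mpr (by omega))
    have huvw : u + v + w ∈ U := hm (Set.mem_Ici.mpr (by omega))
    exact (hrs u hu v hv w hwU huvw).mpr hvw
  have hnn : U ⊆ Set.Ici (0 : ℤ) := by
    intro x hx
    by_contra hneg
    simp only [Set.mem_Ici, not_le] at hneg
    apply hproper
    ext z
    simp only [Set.mem_univ, iff_true]
    have hk : ∀ k : ℕ, ((k : ℤ) + 1) * x ∈ U := by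
      intro k
      induction k with
      | zero => simpa using hx
      | succ n ih =>
        have := hadd _ ih _ hx
        convert this using 1
        push_cast
        ring
    set k := (m - z).toNat with hkdef
    have hk' : (m - z : ℤ) ≤ (k : ℤ) := Int.self_le_toNat _
    have h1 : ((k : ℤ) + 1) * x ∈ U := hk k
    have h2 : z - ((k : ℤ) + 1) * x ∈ U := by
      apply hm
      rw [Set.mem_Ici]
      nlinarith [Int.natCast_nonneg k]
    have := hadd _ h2 _ h1
    simpa using this
  have hm0 : 0 ≤ m := hnn (hm (Set.mem_Ici.mpr le_rfl))
  refine ⟨hm0, ?_, hnn, hadd⟩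
  ext a
  simp only [AddStab, Set.mem_setOf_eq, Set.mem_singleton_iff]
  constructor
  · intro ha
    have haU : a ∈ U := by
      rw [← ha]; exact ⟨0, h0, by simp⟩
    have hnegaU : -a ∈ U := by
      have h0' : (0 : ℤ) ∈ (a + ·) '' U := by rw [ha]; exact h0
      obtain ⟨u, hu, hu0⟩ := h0'
      simp only at hu0
      have : u = -a := by omega
      rwa [← this]
    have h1 := hnn haU
    have h2 := hnn hnegaU
    simp only [Set.mem_Ici] at h1 h2
    omega
  · rintro rfl
    simp
end

section
/- Let U be a ring-supporting subset of ℤ containing an infinite interval. Then exactly one of the following holds: (a) U = ℤ; (b) U is an additive submonoid of ℕ; (c) U is an additive submonoid of the nonpositive integers. -/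
/-!
If `U` contains a ray `[m, ∞)`, then for `u, v ∈ U` a `w` far enough out in the ray makes
`w`, `u + v + w` and `v + w` all lie in `U`, so the ring-supporting condition forces `u + v ∈ U`.
Once `U` is additively closed, a single negative element `a ∈ U` gives `k • a + (x - k • a) = x`
with `x - k • a` in the ray for large `k`, so `U = ℤ`; otherwise `U ⊆ [0, ∞)`.
Rays `(-∞, m]` are handled by passing to `-U`.
-/

open Set
open scoped Pointwise

namespace AddRingSupporting

variable {A : Type*} [AddCommGroup A] {U : Set A}

theorem neg (hU : AddRingSupporting U) : AddRingSupporting (-U) := by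
  refine ⟨by simpa using hU.1, fun u hu v hv w hw huvw => ?_⟩
  simp only [mem_neg, neg_add] at *
  exact hU.2 _ hu _ hv _ hw huvw

variable [LinearOrder A] [IsOrderedAddMonoid A]

theorem add_mem_of_Ici_subset (hU : AddRingSupporting U) {m : A} (hm : Ici m ⊆ U)
    {u v : A} (hu : u ∈ U) (hv : v ∈ U) : u + v ∈ U := by
  set w := m ⊔ (m - (u + v)) ⊔ (m - v)
  have hw : m ≤ w := le_sup_left.trans le_sup_left
  have huvw : m ≤ u + v + w := sub_le_iff_le_add'.1 (le_sup_right.trans le_sup_left)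
  have hvw : m ≤ v + w := sub_le_iff_le_add'.1 le_sup_right
  exact (hU.2 u hu v hv w (hm hw) (hm huvw)).2 (hm hvw)

theorem eq_univ_or_subset_Ici_zero [Archimedean A] (hU : AddRingSupporting U) {m : A}
    (hm : Ici m ⊆ U) : U = univ ∨ U ⊆ Ici 0 := by
  refine or_iff_not_imp_right.2 fun hneg => eq_univ_of_forall fun x => ?_
  obtain ⟨a, ha, ha0⟩ : ∃ a ∈ U, a < 0 := by simpa [subset_def] using hneg
  let S : AddSubmonoid A := ⟨⟨U, fun hu hv => hU.add_mem_of_Ici_subset hm hu hv⟩, hU.1⟩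
  obtain ⟨k, hk⟩ := Archimedean.arch (m - x) (neg_pos.2 ha0)
  have hxk : m ≤ x - k • a := by rwa [smul_neg, sub_le_iff_le_add, ← sub_eq_neg_add] at hk
  exact add_sub_cancel (k • a) x ▸ S.add_mem (S.nsmul_mem ha k) (hm hxk)

theorem neg_Ici_subset_neg {m : A} (hm : Iic m ⊆ U) : Ici (-m) ⊆ -U := by
  rw [← neg_Iic]
  exact neg_subset_neg.2 hm

theorem add_mem_of_Iic_subset (hU : AddRingSupporting U) {m : A} (hm : Iic m ⊆ U)
    {u v : A} (hu : u ∈ U) (hv : v ∈ U) : u + v ∈ U := by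
  simpa [neg_add] using
    hU.neg.add_mem_of_Ici_subset (neg_Ici_subset_neg hm) (u := -v) (v := -u) (by simpa) (by simpa)

theorem eq_univ_or_subset_Iic_zero [Archimedean A] (hU : AddRingSupporting U) {m : A}
    (hm : Iic m ⊆ U) : U = univ ∨ U ⊆ Iic 0 := by
  refine (hU.neg.eq_univ_or_subset_Ici_zero (neg_Ici_subset_neg hm)).imp (fun h => ?_) fun h => ?_
  · rw [← neg_neg U, h, neg_univ]
  · simpa [neg_subset] using h

end AddRingSupporting

theorem ringSupporting_with_infinite_interval (U : Set ℤ) (hU : AddRingSupporting U)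
    (h : ∃ m : ℤ, Set.Ici m ⊆ U ∨ Set.Iic m ⊆ U) :
    (U = Set.univ ∧
        ¬(U ⊆ Set.Ici (0 : ℤ) ∧ ∀ u ∈ U, ∀ v ∈ U, u + v ∈ U) ∧
        ¬(U ⊆ Set.Iic (0 : ℤ) ∧ ∀ u ∈ U, ∀ v ∈ U, u + v ∈ U)) ∨
    (U ≠ Set.univ ∧
        (U ⊆ Set.Ici (0 : ℤ) ∧ ∀ u ∈ U, ∀ v ∈ U, u + v ∈ U) ∧
        ¬(U ⊆ Set.Iic (0 : ℤ) ∧ ∀ u ∈ U, ∀ v ∈ U, u + v ∈ U)) ∨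
    (U ≠ Set.univ ∧
        ¬(U ⊆ Set.Ici (0 : ℤ) ∧ ∀ u ∈ U, ∀ v ∈ U, u + v ∈ U) ∧
        (U ⊆ Set.Iic (0 : ℤ) ∧ ∀ u ∈ U, ∀ v ∈ U, u + v ∈ U)) := by
  obtain ⟨hadd, hcases, x, hx, hx0⟩ : (∀ u ∈ U, ∀ v ∈ U, u + v ∈ U) ∧
      (U = univ ∨ U ⊆ Ici 0 ∨ U ⊆ Iic 0) ∧ ∃ x ∈ U, x ≠ 0 := by
    obtain ⟨m, hm | hm⟩ := h
    · exact ⟨fun u hu v hv => hU.add_mem_of_Ici_subset hm hu hv,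
        (hU.eq_univ_or_subset_Ici_zero hm).imp_right Or.inl,
        m ⊔ 1, hm (mem_Ici.2 le_sup_left), by omega⟩
    · exact ⟨fun u hu v hv => hU.add_mem_of_Iic_subset hm hu hv,
        (hU.eq_univ_or_subset_Iic_zero hm).imp_right Or.inr,
        m ⊓ -1, hm (mem_Iic.2 inf_le_left), by omega⟩
  have not_both : U ⊆ Ici 0 → ¬U ⊆ Iic 0 := fun hpos hneg =>
    hx0 (le_antisymm (hneg hx) (hpos hx))
  rcases hcases with rfl | hpos | hneg
  · exact Or.inl ⟨rfl, fun h => by simpa using h.1 (mem_univ (-1)),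
      fun h => by simpa using h.1 (mem_univ 1)⟩
  · exact Or.inr <| Or.inl ⟨fun h => absurd (hpos (h ▸ mem_univ (-1))) (by norm_num),
      ⟨hpos, hadd⟩, fun h => not_both hpos h.1⟩
  · exact Or.inr <| Or.inr ⟨fun h => absurd (hneg (h ▸ mem_univ 1)) (by norm_num),
      fun h => not_both h.1 hneg, ⟨hneg, hadd⟩⟩
end

section
/- Let n > 1 and r ≥ 0 be integers with 2r < n. Then the set U = ⋃_{k ∈ ℤ} [nk, nk + r] is a ring-supporting subset of ℤ with stabilizer (U:U) = nℤ. -/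
theorem translationOfInterval_ringSupporting (n r : ℤ) (hn : 1 < n) (hr : 0 ≤ r)
    (h2 : 2 * r < n) :
    AddRingSupporting {x : ℤ | ∃ k : ℤ, n * k ≤ x ∧ x ≤ n * k + r} ∧
      AddStab {x : ℤ | ∃ k : ℤ, n * k ≤ x ∧ x ≤ n * k + r} =
        {m : ℤ | ∃ k : ℤ, m = n * k} := by
  have hn0 : (0:ℤ) < n := by omega
  have hnne : n ≠ 0 := by omega
  set U : Set ℤ := {x : ℤ | ∃ k : ℤ, n * k ≤ x ∧ x ≤ n * k + r} with hUdef
  have hmem : ∀ x : ℤ, x ∈ U ↔ x % n ≤ r := by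
    intro x
    constructor
    · rintro ⟨k, h1, h2'⟩
      have hx : x % n = x - n * k := by
        conv_lhs => rw [show x = (x - n * k) + k * n by ring]
        rw [Int.add_mul_emod_self_right]
        exact Int.emod_eq_of_lt (by omega) (by omega)
      omega
    · intro h
      refine ⟨x / n, ?_, ?_⟩
      · have h1 := Int.emod_add_mul_ediv x n
        have h2' := Int.emod_nonneg x hnne
        linarith
      · have h1 := Int.emod_add_mul_ediv x n
        linarith
  have hmod : ∀ a : ℤ, 0 ≤ a → a < n → a % n = a := fun a h1 h2' =>
    Int.emod_eq_of_lt h1 h2'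
  constructor
  · constructor
    · exact ⟨0, by simp, by simpa using hr⟩
    · intro u hu v hv w hw huvw
      rw [hmem] at hu hv hw huvw
      rw [hmem, hmem]
      have ha0 := Int.emod_nonneg u hnne
      have hb0 := Int.emod_nonneg v hnne
      have hc0 := Int.emod_nonneg w hnne
      set a := u % n
      set b := v % n
      set c := w % n
      have hab : (u + v) % n = (a + b) % n := by rw [Int.add_emod]
      have hbc : (v + w) % n = (b + c) % n := by rw [Int.add_emod]
      have habc : (u + v + w) % n = (a + b + c) % n := by
        rw [show u + v + w = (a + b + c) + (u / n + v / n + w / n) * n from by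
          simp only [a, b, c]
          linear_combination -Int.emod_add_mul_ediv u n - Int.emod_add_mul_ediv v n -
            Int.emod_add_mul_ediv w n, Int.add_mul_emod_self_right]
      have hab' : (a + b) % n = a + b := hmod _ (by omega) (by omega)
      have hbc' : (b + c) % n = b + c := hmod _ (by omega) (by omega)
      by_cases hcase : a + b + c < n
      · have : (a + b + c) % n = a + b + c := hmod _ (by omega) hcase
        rw [habc, this] at huvw
        rw [hab, hbc, hab', hbc']
        omega
      · have hsub : (a + b + c) % n = a + b + c - n := by
          conv_lhs => rw [show a + b + c = (a + b + c - n) + 1 * n by ring]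
          rw [Int.add_mul_emod_self_right]
          exact hmod _ (by omega) (by omega)
        rw [habc, hsub] at huvw
        rw [hab, hbc, hab', hbc']
        omega
  · ext m
    simp only [AddStab, Set.mem_setOf_eq]
    constructor
    · intro h
      have hmU : m ∈ U := by
        have : m + 0 ∈ ((m + ·) '' U) := ⟨0, ⟨0, by simp, by simpa using hr⟩, rfl⟩
        rw [h] at this
        simpa using this
      have hnegU : -m ∈ U := by
        have h0 : (0:ℤ) ∈ ((m + ·) '' U) := by
          rw [h]; exact ⟨0, by simp, by simpa using hr⟩
        obtain ⟨u, hu, hmu⟩ := h0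
        have hmu' : m + u = 0 := hmu
        have : u = -m := by omega
        rwa [← this]
      rw [hmem] at hmU hnegU
      have ha0 := Int.emod_nonneg m hnne
      have hb0 := Int.emod_nonneg (-m) hnne
      have halt := Int.emod_lt_of_pos m hn0
      have hblt := Int.emod_lt_of_pos (-m) hn0
      have hsum : (m % n + (-m) % n) % n = 0 := by
        rw [← Int.add_emod]
        simp
      have hdvd : n ∣ (m % n + (-m) % n) := Int.dvd_of_emod_eq_zero hsum
      obtain ⟨t, ht⟩ := hdvd
      have ht0 : 0 ≤ t := by nlinarith
      have ht1 : t < 2 := by nlinarith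
      have hmz : m % n = 0 := by
        interval_cases t <;> omega
      obtain ⟨k, hk⟩ := Int.dvd_of_emod_eq_zero hmz
      exact ⟨k, hk⟩
    · rintro ⟨k, rfl⟩
      ext x
      simp only [Set.mem_image]
      constructor
      · rintro ⟨u, hu, rfl⟩
        rw [hmem] at hu ⊢
        have : (n * k + u) % n = u % n := by
          rw [show n * k + u = u + k * n by ring, Int.add_mul_emod_self_right]
        omega
      · intro hx
        refine ⟨x - n * k, ?_, by ring⟩
        rw [hmem] at hx ⊢
        have : (x - n * k) % n = x % n := by
          rw [show x - n * k = x + (-k) * n by ring, Int.add_mul_emod_self_right]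
        omega
end

section
/- Let U be a subset of ℤ containing 0 with (U:U) = nℤ, n ≥ 2. Then U is ring-supporting and of the form U = I + nℤ for some finite integer interval I if and only if U = ⋃_{k∈ℤ}[nk, nk+r] or U = ⋃_{k∈ℤ}[nk−r, nk] for some natural number r with 2r < n. -/
lemma aux_nk (n k : ℤ) (hn : 0 < n) (h1 : -n < n * k) (h2 : n * k < n) : n * k = 0 := by
  have hk1 : k < 1 := by
    have h : n * k < n * 1 := by linarith
    exact lt_of_mul_lt_mul_left h hn.le
  have hk2 : -1 < k := by
    have h : n * (-1) < n * k := by linarith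
    exact lt_of_mul_lt_mul_left h hn.le
  have hk : k = 0 := by omega
  rw [hk, mul_zero]

lemma mem_char (n r y : ℤ) (hn : 0 < n) (hr : r < n) :
    (∃ k, n * k ≤ y ∧ y ≤ n * k + r) ↔ y % n ≤ r := by
  constructor
  · rintro ⟨k, h1, h2⟩
    have e : y % n = y - n * k := by
      have e0 : (y - n * k) % n = y % n := by
        rw [show y - n * k = y + n * (-k) by ring, Int.add_mul_emod_self_left]
      rw [← e0]
      exact Int.emod_eq_of_lt (by linarith) (by linarith)
    linarith
  · intro h
    have h1 := Int.emod_nonneg y (by omega : n ≠ 0)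
    have h2 : y % n = y - n * (y / n) := Int.emod_def y n
    exact ⟨y / n, by linarith, by linarith⟩

lemma rs_of (U : Set ℤ) (n r : ℤ) (hn : 0 < n) (hr0 : 0 ≤ r) (h2r : 2 * r < n)
    (f : ℤ → ℤ) (hadd : ∀ x y, f (x + y) = f x + f y)
    (hf : ∀ x, x ∈ U ↔ f x % n ≤ r) :
    ∀ u ∈ U, ∀ v ∈ U, ∀ w ∈ U, u + v + w ∈ U → (u + v ∈ U ↔ v + w ∈ U) := by
  intro u hu v hv w hw hsum
  rw [hf] at hu hv hw hsum
  rw [hf, hf]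
  have hn' : n ≠ 0 := by omega
  have nu := Int.emod_nonneg (f u) hn'
  have nv := Int.emod_nonneg (f v) hn'
  have nw := Int.emod_nonneg (f w) hn'
  have lu := Int.emod_lt_of_pos (f u) hn
  have lv := Int.emod_lt_of_pos (f v) hn
  have lw := Int.emod_lt_of_pos (f w) hn
  have f1 : (f u % n + f v % n) % n = f u % n + f v % n :=
    Int.emod_eq_of_lt (by linarith) (by linarith)
  have e1 : f (u + v) % n = f u % n + f v % n := by
    rw [hadd, Int.add_emod, f1]
  have e2 : f (v + w) % n = f v % n + f w % n := by
    rw [hadd, Int.add_emod]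
    exact Int.emod_eq_of_lt (by linarith) (by linarith)
  have e3 : f (u + v + w) % n = (f u % n + f v % n + f w % n) % n := by
    rw [hadd, hadd, Int.add_emod, Int.add_emod (f u) (f v), f1]
  rw [e3] at hsum
  rw [e1, e2]
  rcases lt_or_ge (f u % n + f v % n + f w % n) n with h | h
  · rw [Int.emod_eq_of_lt (by linarith) h] at hsum
    exact iff_of_true (by linarith) (by linarith)
  · have e4 : (f u % n + f v % n + f w % n) % n = f u % n + f v % n + f w % n - n := by
      have e0 : (f u % n + f v % n + f w % n - n) % n = (f u % n + f v % n + f w % n) % n := by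
        rw [show f u % n + f v % n + f w % n - n = f u % n + f v % n + f w % n + n * (-1) by ring,
          Int.add_mul_emod_self_left]
      rw [← e0]
      apply Int.emod_eq_of_lt <;> linarith
    rw [e4] at hsum
    exact iff_of_false (by intro h'; linarith) (by intro h'; linarith)

lemma forward_norm (U : Set ℤ) (n a b : ℤ) (hn : 2 ≤ n) (ha : a ≤ 0) (hb : 0 ≤ b)
    (hr : b - a ≤ n - 2)
    (hRS : ∀ u ∈ U, ∀ v ∈ U, ∀ w ∈ U, u + v + w ∈ U → (u + v ∈ U ↔ v + w ∈ U))
    (hU : U = {x : ℤ | ∃ i k : ℤ, a ≤ i ∧ i ≤ b ∧ x = i + n * k}) :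
    ∃ r : ℕ, 2 * (r : ℤ) < n ∧
      (U = {x : ℤ | ∃ k : ℤ, n * k ≤ x ∧ x ≤ n * k + (r : ℤ)} ∨
        U = {x : ℤ | ∃ k : ℤ, n * k - (r : ℤ) ≤ x ∧ x ≤ n * k}) := by
  subst hU
  by_cases ha0 : a = 0
  · subst ha0
    have h2b : 2 * b < n := by
      by_contra hcon
      push_neg at hcon
      have hb1 : (1:ℤ) ≤ b := by omega
      have hu : (1:ℤ) ∈ {x : ℤ | ∃ i k : ℤ, 0 ≤ i ∧ i ≤ b ∧ x = i + n * k} :=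
        ⟨1, 0, by omega, hb1, by ring⟩
      have hv : b ∈ {x : ℤ | ∃ i k : ℤ, 0 ≤ i ∧ i ≤ b ∧ x = i + n * k} :=
        ⟨b, 0, hb, le_refl b, by ring⟩
      have hsum : (1:ℤ) + b + b ∈ {x : ℤ | ∃ i k : ℤ, 0 ≤ i ∧ i ≤ b ∧ x = i + n * k} :=
        ⟨1 + 2*b - n, 1, by omega, by omega, by ring⟩
      have hvw : b + b ∈ {x : ℤ | ∃ i k : ℤ, 0 ≤ i ∧ i ≤ b ∧ x = i + n * k} :=
        ⟨2*b - n, 1, by omega, by omega, by ring⟩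
      have huv : (1:ℤ) + b ∉ {x : ℤ | ∃ i k : ℤ, 0 ≤ i ∧ i ≤ b ∧ x = i + n * k} := by
        rintro ⟨i, k, h1, h2, h3⟩
        have e : n * k = 1 + b - i := by linarith
        have h4 := aux_nk n k (by omega) (by linarith) (by linarith)
        linarith
      exact huv ((hRS 1 hu b hv b hv hsum).mpr hvw)
    refine ⟨b.toNat, by rw [Int.toNat_of_nonneg hb]; exact h2b, Or.inl ?_⟩
    ext x
    simp only [Set.mem_setOf_eq, Int.toNat_of_nonneg hb]
    constructor
    · rintro ⟨i, k, h1, h2, rfl⟩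
      exact ⟨k, by linarith, by linarith⟩
    · rintro ⟨k, h1, h2⟩
      exact ⟨x - n * k, k, by linarith, by linarith, by ring⟩
  · have ha' : a < 0 := lt_of_le_of_ne ha ha0
    by_cases hb0 : b = 0
    · subst hb0
      have h2a : 2 * (-a) < n := by
        by_contra hcon
        push_neg at hcon
        have hu : (-1:ℤ) ∈ {x : ℤ | ∃ i k : ℤ, a ≤ i ∧ i ≤ 0 ∧ x = i + n * k} :=
          ⟨-1, 0, by omega, by omega, by ring⟩
        have hv : a ∈ {x : ℤ | ∃ i k : ℤ, a ≤ i ∧ i ≤ 0 ∧ x = i + n * k} :=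
          ⟨a, 0, le_refl a, ha, by ring⟩
        have hsum : (-1:ℤ) + a + a ∈ {x : ℤ | ∃ i k : ℤ, a ≤ i ∧ i ≤ 0 ∧ x = i + n * k} :=
          ⟨2*a - 1 + n, -1, by omega, by omega, by ring⟩
        have hvw : a + a ∈ {x : ℤ | ∃ i k : ℤ, a ≤ i ∧ i ≤ 0 ∧ x = i + n * k} :=
          ⟨2*a + n, -1, by omega, by omega, by ring⟩
        have huv : (-1:ℤ) + a ∉ {x : ℤ | ∃ i k : ℤ, a ≤ i ∧ i ≤ 0 ∧ x = i + n * k} := by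
          rintro ⟨i, k, h1, h2, h3⟩
          have e : n * k = -1 + a - i := by linarith
          have h4 := aux_nk n k (by omega) (by linarith) (by linarith)
          linarith
        exact huv ((hRS (-1) hu a hv a hv hsum).mpr hvw)
      refine ⟨(-a).toNat, by rw [Int.toNat_of_nonneg (by omega : (0:ℤ) ≤ -a)]; exact h2a,
        Or.inr ?_⟩
      ext x
      simp only [Set.mem_setOf_eq, Int.toNat_of_nonneg (by omega : (0:ℤ) ≤ -a)]
      constructor
      · rintro ⟨i, k, h1, h2, rfl⟩
        exact ⟨k, by linarith, by linarith⟩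
      · rintro ⟨k, h1, h2⟩
        exact ⟨x - n * k, k, by linarith, by linarith, by ring⟩
    · exfalso
      have hb' : 0 < b := lt_of_le_of_ne hb (Ne.symm hb0)
      have hu : b ∈ {x : ℤ | ∃ i k : ℤ, a ≤ i ∧ i ≤ b ∧ x = i + n * k} :=
        ⟨b, 0, by omega, le_refl b, by ring⟩
      have hv : a ∈ {x : ℤ | ∃ i k : ℤ, a ≤ i ∧ i ≤ b ∧ x = i + n * k} :=
        ⟨a, 0, le_refl a, by omega, by ring⟩
      have hw : (-1:ℤ) ∈ {x : ℤ | ∃ i k : ℤ, a ≤ i ∧ i ≤ b ∧ x = i + n * k} :=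
        ⟨-1, 0, by omega, by omega, by ring⟩
      have hsum : b + a + -1 ∈ {x : ℤ | ∃ i k : ℤ, a ≤ i ∧ i ≤ b ∧ x = i + n * k} :=
        ⟨a + b - 1, 0, by omega, by omega, by ring⟩
      have huv : b + a ∈ {x : ℤ | ∃ i k : ℤ, a ≤ i ∧ i ≤ b ∧ x = i + n * k} :=
        ⟨a + b, 0, by omega, by omega, by ring⟩
      have hvw : a + -1 ∉ {x : ℤ | ∃ i k : ℤ, a ≤ i ∧ i ≤ b ∧ x = i + n * k} := by
        rintro ⟨i, k, h1, h2, h3⟩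
        have e : n * k = a - 1 - i := by linarith
        have h4 := aux_nk n k (by omega) (by linarith) (by linarith)
        linarith
      exact hvw ((hRS b hu a hv (-1) hw hsum).mp huv)

theorem translationOfInterval_characterization (U : Set ℤ) (n : ℤ) (hn : 2 ≤ n)
    (h0 : (0 : ℤ) ∈ U) (hst : AddStab U = {m : ℤ | ∃ k : ℤ, m = n * k}) :
    (AddRingSupporting U ∧
        ∃ a b : ℤ, U = {x : ℤ | ∃ i k : ℤ, a ≤ i ∧ i ≤ b ∧ x = i + n * k}) ↔
      ∃ r : ℕ, 2 * (r : ℤ) < n ∧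
        (U = {x : ℤ | ∃ k : ℤ, n * k ≤ x ∧ x ≤ n * k + (r : ℤ)} ∨
          U = {x : ℤ | ∃ k : ℤ, n * k - (r : ℤ) ≤ x ∧ x ≤ n * k}) := by
  constructor
  · rintro ⟨⟨h0', hRS⟩, a, b, hU⟩
    obtain ⟨i0, k0, hi1, hi2, hi3⟩ : ∃ i k : ℤ, a ≤ i ∧ i ≤ b ∧ (0:ℤ) = i + n * k := by
      rw [hU] at h0; exact h0
    have hr : b - a ≤ n - 2 := by
      by_contra hcon
      push_neg at hcon
      have h1 : (1:ℤ) ∈ AddStab U := by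
        show (fun x => (1:ℤ) + x) '' U = U
        ext x
        simp only [Set.mem_image, hU, Set.mem_setOf_eq]
        constructor
        · rintro ⟨y, ⟨i, k, g1, g2, rfl⟩, rfl⟩
          by_cases hc : i + 1 ≤ b
          · exact ⟨i + 1, k, by omega, hc, by ring⟩
          · exact ⟨i + 1 - n, k + 1, by omega, by omega, by ring⟩
        · rintro ⟨i, k, g1, g2, rfl⟩
          by_cases hc : a ≤ i - 1
          · exact ⟨i - 1 + n * k, ⟨i - 1, k, hc, by omega, rfl⟩, by ring⟩
          · exact ⟨i - 1 + n + n * (k - 1), ⟨i - 1 + n, k - 1, by omega, by omega, rfl⟩, by ring⟩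
      rw [hst] at h1
      obtain ⟨k, hk⟩ := h1
      have e : n * k = 1 := hk.symm
      have h2 : n * k = 0 := aux_nk n k (by omega) (by linarith) (by linarith)
      linarith
    have hU' : U = {x : ℤ | ∃ i k : ℤ, a + n * k0 ≤ i ∧ i ≤ b + n * k0 ∧ x = i + n * k} := by
      rw [hU]
      ext x
      simp only [Set.mem_setOf_eq]
      constructor
      · rintro ⟨i, k, g1, g2, rfl⟩
        exact ⟨i + n * k0, k - k0, by linarith, by linarith, by ring⟩
      · rintro ⟨i, k, g1, g2, rfl⟩
        exact ⟨i - n * k0, k + k0, by linarith, by linarith, by ring⟩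
    exact forward_norm U n (a + n * k0) (b + n * k0) hn (by linarith) (by linarith)
      (by linarith) hRS hU'
  · rintro ⟨r, hr2, hU | hU⟩
    · have hchar : ∀ x : ℤ, x ∈ U ↔ x % n ≤ r := by
        intro x
        rw [hU]
        exact mem_char n r x (by omega) (by omega)
      refine ⟨⟨h0, rs_of U n r (by omega) (Int.natCast_nonneg r) hr2 id (fun x y => rfl) hchar⟩,
        0, (r : ℤ), ?_⟩
      rw [hU]
      ext x
      simp only [Set.mem_setOf_eq]
      constructor
      · rintro ⟨k, h1, h2⟩
        exact ⟨x - n * k, k, by linarith, by linarith, by ring⟩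
      · rintro ⟨i, k, h1, h2, rfl⟩
        exact ⟨k, by linarith, by linarith⟩
    · have hchar : ∀ x : ℤ, x ∈ U ↔ (-x) % n ≤ r := by
        intro x
        rw [hU]
        show (∃ k : ℤ, n * k - (r:ℤ) ≤ x ∧ x ≤ n * k) ↔ _
        rw [← mem_char n r (-x) (by omega) (by omega)]
        constructor
        · rintro ⟨k, h1, h2⟩
          have e : n * (-k) = -(n * k) := by ring
          exact ⟨-k, by linarith, by linarith⟩
        · rintro ⟨k, h1, h2⟩
          have e : n * (-k) = -(n * k) := by ring
          exact ⟨-k, by linarith, by linarith⟩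
      refine ⟨⟨h0, rs_of U n r (by omega) (Int.natCast_nonneg r) hr2 (fun x => -x)
        (fun x y => by ring) hchar⟩, -(r : ℤ), 0, ?_⟩
      rw [hU]
      ext x
      simp only [Set.mem_setOf_eq]
      constructor
      · rintro ⟨k, h1, h2⟩
        exact ⟨x - n * k, k, by linarith, by linarith, by ring⟩
      · rintro ⟨i, k, h1, h2, rfl⟩
        exact ⟨k, by linarith, by linarith⟩
end

section
/- Let U be a ring-supporting subset of ℤ with (U:U) = nℤ, n > 1, that does not contain an infinite interval, and write U as a disjoint union of maximal finite intervals. Then the interval of U containing 0 is either [0, r] or [−r, 0] for some natural number r with 2r < n. -/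
theorem interval_containing_zero (U : Set ℤ) (hU : AddRingSupporting U)
    (n : ℤ) (hn : 1 < n) (hst : AddStab U = {m : ℤ | ∃ k : ℤ, m = n * k})
    (hnoint : ¬ ∃ m : ℤ, Set.Ici m ⊆ U ∨ Set.Iic m ⊆ U)
    (a b : ℤ) (ha0 : a ≤ 0) (h0b : 0 ≤ b)
    (hsub : Set.Icc a b ⊆ U) (ha : a - 1 ∉ U) (hb : b + 1 ∉ U) :
    (a = 0 ∧ 2 * b < n) ∨ (b = 0 ∧ 2 * (-a) < n) := by
  -- periodicity from the stabilizer
  have hmem : ∀ k x : ℤ, x ∈ U → n * k + x ∈ U := by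
    intro k x hx
    have h1 : (n * k : ℤ) ∈ AddStab U := by
      rw [hst]; exact ⟨k, rfl⟩
    have h2 : ((n * k) + ·) '' U = U := h1
    rw [← h2]
    exact ⟨x, hx, rfl⟩
  have hIcc : ∀ x : ℤ, a ≤ x → x ≤ b → x ∈ U := fun x h1 h2 =>
    hsub (Set.mem_Icc.mpr ⟨h1, h2⟩)
  -- a full period forces U = ℤ
  have hfull : ∀ c : ℤ, Set.Icc c (c + n - 1) ⊆ U → ∀ x : ℤ, x ∈ U := by
    intro c hc x
    have h1 : 0 ≤ (x - c) % n := Int.emod_nonneg _ (by omega)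
    have h2 : (x - c) % n < n := Int.emod_lt_of_pos _ (by omega)
    have h3 : n * ((x - c) / n) + (x - c) % n = x - c := Int.mul_ediv_add_emod _ _
    have h4 := hmem ((x - c) / n) (c + (x - c) % n)
      (hc (Set.mem_Icc.mpr ⟨by omega, by omega⟩))
    have h5 : x = n * ((x - c) / n) + (c + (x - c) % n) := by omega
    rwa [← h5] at h4
  -- a = 0 or b = 0
  have hab : a = 0 ∨ b = 0 := by
    by_contra hcon
    push_neg at hcon
    have ha' : a < 0 := lt_of_le_of_ne ha0 hcon.1
    have hb' : 0 < b := lt_of_le_of_ne h0b (Ne.symm hcon.2)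
    have hm1 : (-1 : ℤ) ∈ U := hIcc _ (by omega) (by omega)
    have hp1 : (1 : ℤ) ∈ U := hIcc _ (by omega) (by omega)
    have hbU : b ∈ U := hIcc _ (by omega) le_rfl
    have hsum : (-1 : ℤ) + 1 + b ∈ U := by
      have : (-1 : ℤ) + 1 + b = b := by ring
      rwa [this]
    have := (hU.2 _ hm1 _ hp1 _ hbU hsum).mp (by
      have : (-1 : ℤ) + 1 = 0 := by ring
      rw [this]; exact hU.1)
    have h1b : (1 : ℤ) + b = b + 1 := by ring
    rw [h1b] at this
    exact hb this
  rcases hab with rfl | rfl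
  · -- a = 0, show 2 * b < n
    left
    refine ⟨rfl, ?_⟩
    by_contra hcon
    push_neg at hcon  -- n ≤ 2 * b
    have hb1 : 1 ≤ b := by omega
    by_cases hbn : n ≤ b
    · exact hnoint ⟨0, Or.inl fun x _ => hfull 0 (fun y hy =>
        hIcc y (by simp at hy; omega) (by simp at hy; omega)) x⟩
    · -- n - b ∈ [0, b]
      have hu : (n - b : ℤ) ∈ U := hIcc _ (by omega) (by omega)
      have hv : b ∈ U := hIcc _ (by omega) le_rfl
      have hw : (1 : ℤ) ∈ U := hIcc _ (by omega) (by omega)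
      have hsum : (n - b) + b + 1 ∈ U := by
        have h1 : (n - b) + b + 1 = n * 1 + 1 := by ring
        rw [h1]; exact hmem 1 1 hw
      have huv : (n - b) + b ∈ U := by
        have h1 : (n - b) + b = n * 1 + 0 := by ring
        rw [h1]; exact hmem 1 0 hU.1
      exact hb ((hU.2 _ hu _ hv _ hw hsum).mp huv)
  · -- b = 0, show 2 * (-a) < n
    right
    refine ⟨rfl, ?_⟩
    by_contra hcon
    push_neg at hcon  -- n ≤ 2 * (-a)
    have ha1 : a ≤ -1 := by omega
    by_cases han : a ≤ -n
    · exact hnoint ⟨0, Or.inr fun x _ => hfull a (fun y hy =>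
        hIcc y (by simp at hy; omega) (by simp at hy; omega)) x⟩
    · -- -a - n ∈ [a, 0]
      have hu : (-a - n : ℤ) ∈ U := hIcc _ (by omega) (by omega)
      have hv : a ∈ U := hIcc _ le_rfl (by omega)
      have hw : (-1 : ℤ) ∈ U := hIcc _ (by omega) (by omega)
      have hsum : (-a - n) + a + (-1) ∈ U := by
        have h1 : (-a - n) + a + (-1) = n * (-1) + (-1) := by ring
        rw [h1]; exact hmem (-1) (-1) hw
      have huv : (-a - n) + a ∈ U := by
        have h1 : (-a - n) + a = n * (-1) + 0 := by ring
        rw [h1]; exact hmem (-1) 0 hU.1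
      have := (hU.2 _ hu _ hv _ hw hsum).mp huv
      have h1 : a + (-1) = a - 1 := by ring
      rw [h1] at this
      exact ha this
end

section
/- The ring-supporting subsets U of ℤ with (U:U) = 4ℤ are exactly: 4ℤ, 4ℤ ∪ (4ℤ+1), and 4ℤ ∪ (4ℤ+3). -/
lemma imgIff (U : Set ℤ) (m x : ℤ) : x ∈ (m + ·) '' U ↔ x - m ∈ U := by
  constructor
  · rintro ⟨y, hy, rfl⟩; simpa using hy
  · intro h; exact ⟨x - m, h, by ring⟩

lemma stabIff (U : Set ℤ) (m : ℤ) : m ∈ AddStab U ↔ ∀ x, x - m ∈ U ↔ x ∈ U := by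
  show (m + ·) '' U = U ↔ _
  rw [Set.ext_iff]
  exact forall_congr' fun x => iff_congr (imgIff U m x) Iff.rfl

lemma memA (x : ℤ) : x ∈ {x : ℤ | ∃ k : ℤ, x = 4 * k} ↔ x % 4 = 0 := by
  simp only [Set.mem_setOf_eq]
  constructor
  · rintro ⟨k, rfl⟩; omega
  · intro h; exact ⟨x / 4, by omega⟩

lemma memB (x : ℤ) : x ∈ {x : ℤ | ∃ k : ℤ, x = 4 * k ∨ x = 4 * k + 1} ↔
    x % 4 = 0 ∨ x % 4 = 1 := by
  simp only [Set.mem_setOf_eq]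
  constructor
  · rintro ⟨k, rfl | rfl⟩ <;> omega
  · rintro (h | h)
    · exact ⟨x / 4, Or.inl (by omega)⟩
    · exact ⟨x / 4, Or.inr (by omega)⟩

lemma memC (x : ℤ) : x ∈ {x : ℤ | ∃ k : ℤ, x = 4 * k ∨ x = 4 * k + 3} ↔
    x % 4 = 0 ∨ x % 4 = 3 := by
  simp only [Set.mem_setOf_eq]
  constructor
  · rintro ⟨k, rfl | rfl⟩ <;> omega
  · rintro (h | h)
    · exact ⟨x / 4, Or.inl (by omega)⟩
    · exact ⟨x / 4, Or.inr (by omega)⟩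

theorem ringSupporting_stab_four (U : Set ℤ) :
    (AddRingSupporting U ∧ AddStab U = {m : ℤ | ∃ k : ℤ, m = 4 * k}) ↔
      (U = {x : ℤ | ∃ k : ℤ, x = 4 * k} ∨
        U = {x : ℤ | ∃ k : ℤ, x = 4 * k ∨ x = 4 * k + 1} ∨
        U = {x : ℤ | ∃ k : ℤ, x = 4 * k ∨ x = 4 * k + 3}) := by
  constructor
  · rintro ⟨⟨h0, hRS⟩, hStab⟩
    -- membership is determined by residue mod 4
    have hmod : ∀ x : ℤ, x ∈ U ↔ x % 4 ∈ U := by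
      intro x
      have hs : (4 * (x / 4)) ∈ AddStab U := by
        rw [hStab]; exact ⟨x / 4, rfl⟩
      have h := (stabIff U (4 * (x / 4))).mp hs x
      have he : x - 4 * (x / 4) = x % 4 := by omega
      rw [he] at h
      exact h.symm
    have hm : ∀ y r : ℤ, y % 4 = r → r ∈ U → y ∈ U := by
      intro y r hyr hr; exact (hmod y).mpr (by rw [hyr]; exact hr)
    have hm' : ∀ y r : ℤ, y ∈ U → y % 4 = r → r ∈ U := by
      intro y r hy hyr; rw [← hyr]; exact (hmod y).mp hy
    by_cases h2 : (2 : ℤ) ∈ U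
    · exfalso
      by_cases h1 : (1 : ℤ) ∈ U
      · by_cases h3 : (3 : ℤ) ∈ U
        · -- U = ℤ, so 2 stabilizes it, contradiction
          have hall : ∀ y : ℤ, y ∈ U := by
            intro y
            rcases (by omega : y % 4 = 0 ∨ y % 4 = 1 ∨ y % 4 = 2 ∨ y % 4 = 3) with h | h | h | h
            exacts [hm y 0 h h0, hm y 1 h h1, hm y 2 h h2, hm y 3 h h3]
          have h2s : (2 : ℤ) ∈ AddStab U := (stabIff U 2).mpr (fun x => by simp [hall])
          rw [hStab] at h2s
          obtain ⟨k, hk⟩ := h2s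
          omega
        · -- residues {0,1,2}: use (1,1,2)
          have := (hRS 1 h1 1 h1 2 h2 (hm (1 + 1 + 2) 0 (by norm_num) h0)).mp
            (hm (1 + 1) 2 (by norm_num) h2)
          exact h3 (hm' (1 + 2) 3 this (by norm_num))
      · by_cases h3 : (3 : ℤ) ∈ U
        · -- residues {0,2,3}: use (3,3,2)
          have := (hRS 3 h3 3 h3 2 h2 (hm (3 + 3 + 2) 0 (by norm_num) h0)).mp
            (hm (3 + 3) 2 (by norm_num) h2)
          exact h1 (hm' (3 + 2) 1 this (by norm_num))
        · -- residues {0,2}: 2 stabilizes, contradiction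
          have key : ∀ y : ℤ, y ∈ U ↔ (y % 4 = 0 ∨ y % 4 = 2) := by
            intro y
            constructor
            · intro hy
              rcases (by omega : y % 4 = 0 ∨ y % 4 = 1 ∨ y % 4 = 2 ∨ y % 4 = 3) with h | h | h | h
              · exact Or.inl h
              · exact absurd (hm' y 1 hy h) h1
              · exact Or.inr h
              · exact absurd (hm' y 3 hy h) h3
            · rintro (h | h)
              exacts [hm y 0 h h0, hm y 2 h h2]
          have h2s : (2 : ℤ) ∈ AddStab U :=
            (stabIff U 2).mpr (fun x => by rw [key, key]; omega)
          rw [hStab] at h2s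
          obtain ⟨k, hk⟩ := h2s
          omega
    · by_cases h1 : (1 : ℤ) ∈ U
      · by_cases h3 : (3 : ℤ) ∈ U
        · -- residues {0,1,3}: use (1,1,3)
          exfalso
          have := (hRS 1 h1 1 h1 3 h3 (hm (1 + 1 + 3) 1 (by norm_num) h1)).mpr
            (hm (1 + 3) 0 (by norm_num) h0)
          exact h2 (hm' (1 + 1) 2 this (by norm_num))
        · -- U = 4ℤ ∪ (4ℤ+1)
          right; left
          ext x
          rw [memB]
          constructor
          · intro hx
            rcases (by omega : x % 4 = 0 ∨ x % 4 = 1 ∨ x % 4 = 2 ∨ x % 4 = 3) with h | h | h | h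
            · exact Or.inl h
            · exact Or.inr h
            · exact absurd (hm' x 2 hx h) h2
            · exact absurd (hm' x 3 hx h) h3
          · rintro (h | h)
            exacts [hm x 0 h h0, hm x 1 h h1]
      · by_cases h3 : (3 : ℤ) ∈ U
        · -- U = 4ℤ ∪ (4ℤ+3)
          right; right
          ext x
          rw [memC]
          constructor
          · intro hx
            rcases (by omega : x % 4 = 0 ∨ x % 4 = 1 ∨ x % 4 = 2 ∨ x % 4 = 3) with h | h | h | h
            · exact Or.inl h
            · exact absurd (hm' x 1 hx h) h1
            · exact absurd (hm' x 2 hx h) h2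
            · exact Or.inr h
          · rintro (h | h)
            exacts [hm x 0 h h0, hm x 3 h h3]
        · -- U = 4ℤ
          left
          ext x
          rw [memA]
          constructor
          · intro hx
            rcases (by omega : x % 4 = 0 ∨ x % 4 = 1 ∨ x % 4 = 2 ∨ x % 4 = 3) with h | h | h | h
            · exact h
            · exact absurd (hm' x 1 hx h) h1
            · exact absurd (hm' x 2 hx h) h2
            · exact absurd (hm' x 3 hx h) h3
          · intro h
            exact hm x 0 h h0
  · rintro (rfl | rfl | rfl)
    · refine ⟨⟨(memA 0).mpr (by norm_num), ?_⟩, ?_⟩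
      · intro u hu v hv w hw hs
        rw [memA] at hu hv hw hs
        rw [memA, memA]
        omega
      · ext m
        rw [stabIff, Set.mem_setOf_eq]
        constructor
        · intro h
          have a : m ∈ {x : ℤ | ∃ k : ℤ, x = 4 * k} :=
            (h m).mp ((memA _).mpr (by omega))
          rw [memA] at a
          exact ⟨m / 4, by omega⟩
        · rintro ⟨k, rfl⟩
          intro x
          rw [memA, memA]
          omega
    · refine ⟨⟨(memB 0).mpr (by norm_num), ?_⟩, ?_⟩
      · intro u hu v hv w hw hs
        rw [memB] at hu hv hw hs
        rw [memB, memB]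
        omega
      · ext m
        rw [stabIff, Set.mem_setOf_eq]
        constructor
        · intro h
          have a := (h m).mp ((memB _).mpr (by omega))
          have b := (h (m + 1)).mp ((memB _).mpr (by omega))
          rw [memB] at a b
          exact ⟨m / 4, by omega⟩
        · rintro ⟨k, rfl⟩
          intro x
          rw [memB, memB]
          omega
    · refine ⟨⟨(memC 0).mpr (by norm_num), ?_⟩, ?_⟩
      · intro u hu v hv w hw hs
        rw [memC] at hu hv hw hs
        rw [memC, memC]
        omega
      · ext m
        rw [stabIff, Set.mem_setOf_eq]
        constructor
        · intro h
          have a := (h m).mp ((memC _).mpr (by omega))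
          have b := (h (m + 3)).mp ((memC _).mpr (by omega))
          rw [memC] at a b
          exact ⟨m / 4, by omega⟩
        · rintro ⟨k, rfl⟩
          intro x
          rw [memC, memC]
          omega
end

section
/- Let n > 1 and r ≥ 0 with 2r < n, and let U = ⋃_{k∈ℤ}[nk−r, nk]. The unique strictly increasing map δ : ℤ → ℤ with δ(0) = 0 and image U is given by δ((r+1)j − i) = nj − i for j ∈ ℤ and i ∈ {0,...,r}, and δ is a pseudomorphism of additive groups: δ is injective, δ(0) = 0, and whenever δ(m) + δ(m') ∈ U, one has δ(m + m') = δ(m) + δ(m'). -/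
/-!
Write every integer as `m = (r + 1) * j - i` with `0 ≤ i ≤ r`. The map
`(r + 1) * j - i ↦ n * j - i` is strictly increasing, fixes `0` and has image `U`, so it is the
enumeration `δ`. If `δ m + δ m' = n * (j + j') - (i + i')` lies in `U`, then since
`0 ≤ i + i' ≤ 2 * r < n` it lies in the block ending at `n * (j + j')`, forcing `i + i' ≤ r`;
hence `m + m' = (r + 1) * (j + j') - (i + i')` is again in normal form and `δ` is additive there.
-/

open Set

section StrictMonoInt

variable {β : Type*} [LinearOrder β] {f g : ℤ → β}

lemma StrictMono.apply_succ_le_of_range_subset (hf : StrictMono f) (hg : StrictMono g)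
    (hfg : range f ⊆ range g) {m : ℤ} (hm : f m = g m) : g (m + 1) ≤ f (m + 1) := by
  obtain ⟨k, hk⟩ := hfg (mem_range_self (m + 1))
  have hmk : m < k := hg.lt_iff_lt.mp (by rw [hk, ← hm]; exact hf (lt_add_one m))
  rw [← hk]
  exact hg.monotone (Int.add_one_le_of_lt hmk)

lemma StrictMono.apply_sub_one_le_of_range_subset (hf : StrictMono f) (hg : StrictMono g)
    (hfg : range f ⊆ range g) {m : ℤ} (hm : f m = g m) : f (m - 1) ≤ g (m - 1) := by
  obtain ⟨k, hk⟩ := hfg (mem_range_self (m - 1))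
  have hkm : k < m := hg.lt_iff_lt.mp (by rw [hk, ← hm]; exact hf (sub_one_lt m))
  rw [← hk]
  exact hg.monotone (Int.le_sub_one_of_lt hkm)

lemma StrictMono.eq_of_range_eq_of_apply_eq (hf : StrictMono f) (hg : StrictMono g)
    (hfg : range f = range g) {m₀ : ℤ} (h₀ : f m₀ = g m₀) : f = g := by
  funext m
  induction m using Int.inductionOn' (b := m₀) with
  | zero => exact h₀
  | succ m _ ih =>
    exact le_antisymm (hg.apply_succ_le_of_range_subset hf hfg.ge ih.symm)
      (hf.apply_succ_le_of_range_subset hg hfg.le ih)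
  | pred m _ ih =>
    exact le_antisymm (hf.apply_sub_one_le_of_range_subset hg hfg.le ih)
      (hg.apply_sub_one_le_of_range_subset hf hfg.ge ih.symm)

end StrictMonoInt

section Blocks

variable {n r : ℤ}

def blockUnion (n r : ℤ) : Set ℤ := {x : ℤ | ∃ k : ℤ, n * k - r ≤ x ∧ x ≤ n * k}

/-- `(m + r) / (r + 1)` is the block index `j` in `m = (r + 1) * j - i`, `0 ≤ i ≤ r`. -/
def blockEnum (n r m : ℤ) : ℤ := m + (n - r - 1) * ((m + r) / (r + 1))

lemma exists_eq_mul_sub (hr : 0 ≤ r) (m : ℤ) :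
    ∃ j i : ℤ, 0 ≤ i ∧ i ≤ r ∧ m = (r + 1) * j - i := by
  refine ⟨(m + r) / (r + 1), r - (m + r) % (r + 1), ?_, ?_, ?_⟩
  · have := Int.emod_lt_of_pos (m + r) (by omega : (0 : ℤ) < r + 1); omega
  · have := Int.emod_nonneg (m + r) (by omega : r + 1 ≠ 0); omega
  · have := Int.mul_ediv_add_emod (m + r) (r + 1); omega

lemma blockEnum_mul_sub (j : ℤ) {i : ℤ} (hi : 0 ≤ i) (hir : i ≤ r) :
    blockEnum n r ((r + 1) * j - i) = n * j - i := by
  have hq : ((r + 1) * j - i + r) / (r + 1) = j := by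
    rw [show (r + 1) * j - i + r = (r - i) + j * (r + 1) by ring,
      Int.add_mul_ediv_right _ _ (by omega), Int.ediv_eq_zero_of_lt (by omega) (by omega),
      zero_add]
  rw [blockEnum, hq]
  ring

lemma blockEnum_zero (hr : 0 ≤ r) : blockEnum n r 0 = 0 := by
  simpa using blockEnum_mul_sub (n := n) 0 le_rfl hr

lemma blockEnum_strictMono (hr : 0 ≤ r) (hrn : r < n) : StrictMono (blockEnum n r) := by
  refine strictMono_int_of_lt_succ fun m ↦ ?_
  obtain ⟨j, i, hi, hir, rfl⟩ := exists_eq_mul_sub hr m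
  rcases hi.eq_or_lt with rfl | hi
  · -- the step from the end `n * j` of a block to the start of the next one is `n - r > 0`
    rw [show (r + 1) * j - 0 + 1 = (r + 1) * (j + 1) - r by ring,
      blockEnum_mul_sub (j + 1) hr le_rfl, blockEnum_mul_sub j le_rfl hr]
    linarith
  · rw [show (r + 1) * j - i + 1 = (r + 1) * j - (i - 1) by ring,
      blockEnum_mul_sub j hi.le hir, blockEnum_mul_sub j (by omega) (by omega)]
    omega

lemma range_blockEnum (hr : 0 ≤ r) : range (blockEnum n r) = blockUnion n r := by
  ext x
  constructor
  · rintro ⟨m, rfl⟩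
    obtain ⟨j, i, hi, hir, rfl⟩ := exists_eq_mul_sub hr m
    rw [blockEnum_mul_sub j hi hir]
    exact ⟨j, by omega, by omega⟩
  · rintro ⟨k, hlo, hhi⟩
    refine ⟨(r + 1) * k - (n * k - x), ?_⟩
    rw [blockEnum_mul_sub k (by omega) (by omega)]
    ring

lemma mul_sub_mem_blockUnion_iff (hrn : r < n) (J : ℤ) {s : ℤ} (hs : 0 ≤ s) (hsn : s < n) :
    n * J - s ∈ blockUnion n r ↔ s ≤ r := by
  constructor
  · rintro ⟨k, hlo, hhi⟩
    have hk : k = J := by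
      have hlt : k < J + 1 := lt_of_mul_lt_mul_left (by linarith : n * k < n * (J + 1))
        (by omega)
      have hgt : J - 1 < k := lt_of_mul_lt_mul_left (by linarith : n * (J - 1) < n * k)
        (by omega)
      omega
    subst hk
    omega
  · intro hsr
    exact ⟨J, by omega, by omega⟩

lemma blockEnum_add_of_add_mem (hr : 0 ≤ r) (h2 : 2 * r < n) (m m' : ℤ)
    (hmem : blockEnum n r m + blockEnum n r m' ∈ blockUnion n r) :
    blockEnum n r (m + m') = blockEnum n r m + blockEnum n r m' := by
  obtain ⟨j, i, hi, hir, rfl⟩ := exists_eq_mul_sub hr m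
  obtain ⟨j', i', hi', hir', rfl⟩ := exists_eq_mul_sub hr m'
  rw [blockEnum_mul_sub j hi hir, blockEnum_mul_sub j' hi' hir',
    show n * j - i + (n * j' - i') = n * (j + j') - (i + i') by ring,
    mul_sub_mem_blockUnion_iff (by omega) _ (by omega) (by omega)] at hmem
  rw [show (r + 1) * j - i + ((r + 1) * j' - i') = (r + 1) * (j + j') - (i + i') by ring,
    blockEnum_mul_sub _ (by omega) hmem, blockEnum_mul_sub j hi hir,
    blockEnum_mul_sub j' hi' hir']
  ring

end Blocks

theorem enumeration_is_pseudomorphism_general (n r : ℤ) (hr : 0 ≤ r)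
    (h2 : 2 * r < n) (δ : ℤ → ℤ) (hmono : StrictMono δ) (h0 : δ 0 = 0)
    (hrange : Set.range δ = {x : ℤ | ∃ k : ℤ, n * k - r ≤ x ∧ x ≤ n * k}) :
    (∀ j i : ℤ, 0 ≤ i → i ≤ r → δ ((r + 1) * j - i) = n * j - i) ∧
    Function.Injective δ ∧
    (∀ m m' : ℤ, δ m + δ m' ∈ {x : ℤ | ∃ k : ℤ, n * k - r ≤ x ∧ x ≤ n * k} →
      δ (m + m') = δ m + δ m') := by
  have hmono' : StrictMono (blockEnum n r) := blockEnum_strictMono hr (by omega)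
  obtain rfl : δ = blockEnum n r :=
    hmono.eq_of_range_eq_of_apply_eq hmono' (hrange.trans (range_blockEnum hr).symm)
      (h0.trans (blockEnum_zero hr).symm)
  exact ⟨fun j _ hi hir ↦ blockEnum_mul_sub j hi hir, hmono'.injective,
    blockEnum_add_of_add_mem hr h2⟩

theorem enumeration_is_pseudomorphism (n r : ℤ) (hn : 1 < n) (hr : 0 ≤ r)
    (h2 : 2 * r < n) (δ : ℤ → ℤ) (hmono : StrictMono δ) (h0 : δ 0 = 0)
    (hrange : Set.range δ = {x : ℤ | ∃ k : ℤ, n * k - r ≤ x ∧ x ≤ n * k}) :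
    (∀ j i : ℤ, 0 ≤ i → i ≤ r → δ ((r + 1) * j - i) = n * j - i) ∧
    Function.Injective δ ∧
    (∀ m m' : ℤ, δ m + δ m' ∈ {x : ℤ | ∃ k : ℤ, n * k - r ≤ x ∧ x ≤ n * k} →
      δ (m + m') = δ m + δ m') :=
  enumeration_is_pseudomorphism_general n r hr h2 δ hmono h0 hrange
end
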